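/- arXiv:2003.11653 — 3 statements merged into one kernel-verified Lean document; each statement's English description precedes it below -/
import Mathlib

section
/- For a real sequence s_{-2}, s_{-1}, s_0, ..., with Hankel determinants Δ_{p,k} = det[(s_{p+i+j})_{0 ≤ i,j ≤ k-1}], one has Δ_{0,k}·Δ_{-2,k} − Δ_{0,k-1}·Δ_{-2,k+1} = Δ_{-1,k}² for all k ≥ 1. -/
/-!
Let `H` be the Hankel matrix of size `k + 1` with offset `-2`. Deleting the first row and column
of `H` leaves the Hankel matrix of size `k` with offset `0`, deleting the last ones leaves offset
`-2`, deleting a first and a last one leaves offset `-1`, and deleting both first and last rows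
and columns leaves size `k - 1` and offset `0`. The identity is therefore the Desnanot–Jacobi
identity for `H`.

Desnanot–Jacobi follows from Schur complements with respect to the interior block `A`: when `A`
is invertible, `det H` and the four minors above are `det A` times the determinant, resp. the
entries, of the `2 × 2` Schur complement. In general, `H + t • 1` has an invertible interior block
for all `t` outside the finite spectrum of `-A`, and both sides are continuous in `t`.
-/

/-- Hankel determinant `Δ_{p,k}` of a doubly-infinite real sequence:
the determinant of the `k × k` matrix with `(i,j)` entry `s (p + i + j)`.
By convention `Δ_{p,0} = 1` (determinant of the empty matrix). -/
noncomputable def hankelDet (s : ℤ → ℝ) (p : ℤ) (k : ℕ) : ℝ :=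
  (Matrix.of fun i j : Fin k => s (p + (i : ℕ) + (j : ℕ))).det

namespace Matrix

variable {ι κ κ' m n R : Type*} [Fintype ι] [DecidableEq ι] [Fintype κ'] [DecidableEq κ']
  [Fintype m] [DecidableEq m] [Fintype n] [DecidableEq n] [CommRing R]

theorem det_submatrix_equiv (A : Matrix m m R) (e f : n ≃ m) :
    (A.submatrix e f).det = Equiv.Perm.sign (f.trans e.symm) * A.det := by
  have : A.submatrix e f = (A.submatrix e e).submatrix id (f.trans e.symm) := by
    ext i j
    simp
  rw [this, det_permute', det_submatrix_equiv_self]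

theorem det_submatrix_equiv_mul_det_submatrix_equiv (A B : Matrix m m R) (e f : n ≃ m) :
    (A.submatrix e f).det * (B.submatrix f e).det = A.det * B.det := by
  have hsign : Equiv.Perm.sign (e.trans f.symm) = Equiv.Perm.sign (f.trans e.symm) := by
    rw [← Equiv.Perm.sign_inv]
    rfl
  rw [det_submatrix_equiv, det_submatrix_equiv, hsign, mul_mul_mul_comm, ← Int.cast_mul,
    ← Units.val_mul, Int.units_mul_self, Units.val_one, Int.cast_one, one_mul]

theorem det_submatrix_sumMap_of_invertible (M : Matrix (ι ⊕ κ) (ι ⊕ κ) R)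
    [Invertible M.toBlocks₁₁] (f g : κ' → κ) :
    (M.submatrix (Sum.map id f) (Sum.map id g)).det = M.toBlocks₁₁.det *
      ((M.toBlocks₂₂ - M.toBlocks₂₁ * ⅟M.toBlocks₁₁ * M.toBlocks₁₂).submatrix f g).det := by
  have : M.submatrix (Sum.map id f) (Sum.map id g) = fromBlocks M.toBlocks₁₁
      (M.toBlocks₁₂.submatrix id g) (M.toBlocks₂₁.submatrix f id)
      (M.toBlocks₂₂.submatrix f g) := by
    ext (i | a) (j | b) <;> rfl
  rw [this, det_fromBlocks₁₁]
  rfl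

def borderedMinor (M : Matrix (ι ⊕ Fin 2) (ι ⊕ Fin 2) R) (a b : Fin 2) : R :=
  (M.submatrix (Sum.map id fun _ : Fin 1 => a) (Sum.map id fun _ : Fin 1 => b)).det

theorem det_mul_det_toBlocks₁₁_of_invertible (M : Matrix (ι ⊕ Fin 2) (ι ⊕ Fin 2) R)
    [Invertible M.toBlocks₁₁] :
    M.det * M.toBlocks₁₁.det =
      M.borderedMinor 0 0 * M.borderedMinor 1 1 - M.borderedMinor 0 1 * M.borderedMinor 1 0 := by
  set S := M.toBlocks₂₂ - M.toBlocks₂₁ * ⅟M.toBlocks₁₁ * M.toBlocks₁₂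
  have hdet : M.det = M.toBlocks₁₁.det * S.det := by
    simpa only [Sum.map_id_id, submatrix_id_id] using
      det_submatrix_sumMap_of_invertible M id id
  have hminor (a b : Fin 2) : M.borderedMinor a b = M.toBlocks₁₁.det * S a b := by
    rw [borderedMinor, det_submatrix_sumMap_of_invertible, det_fin_one]
    rfl
  rw [hdet, hminor, hminor, hminor, hminor, det_fin_two]
  ring

theorem det_mul_det_toBlocks₁₁ {𝕜 : Type*} [NontriviallyNormedField 𝕜] [CompleteSpace 𝕜]
    (M : Matrix (ι ⊕ Fin 2) (ι ⊕ Fin 2) 𝕜) :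
    M.det * M.toBlocks₁₁.det =
      M.borderedMinor 0 0 * M.borderedMinor 1 1 - M.borderedMinor 0 1 * M.borderedMinor 1 0 := by
  set P : 𝕜 → Matrix (ι ⊕ Fin 2) (ι ⊕ Fin 2) 𝕜 := fun t => M + t • 1
  have hP : Continuous P := continuous_const.add (continuous_id.smul continuous_const)
  have hminor (a b : Fin 2) : Continuous fun t => (P t).borderedMinor a b :=
    (hP.matrix_submatrix _ _).matrix_det
  have hLHS : Continuous fun t => (P t).det * (P t).toBlocks₁₁.det :=
    hP.matrix_det.mul (hP.matrix_submatrix Sum.inl Sum.inl).matrix_det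
  have hRHS : Continuous fun t => (P t).borderedMinor 0 0 * (P t).borderedMinor 1 1 -
      (P t).borderedMinor 0 1 * (P t).borderedMinor 1 0 :=
    ((hminor 0 0).mul (hminor 1 1)).sub ((hminor 0 1).mul (hminor 1 0))
  have hinv (t : 𝕜) (ht : t ∉ spectrum 𝕜 (-M.toBlocks₁₁)) : IsUnit (P t).toBlocks₁₁.det := by
    have hblock : (P t).toBlocks₁₁ = algebraMap 𝕜 _ t - -M.toBlocks₁₁ := by
      ext i j
      simp [P, toBlocks₁₁, one_apply, algebraMap_matrix_apply, add_comm]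
    rw [← isUnit_iff_isUnit_det, hblock]
    exact not_not.mp ht
  have hcompl : Set.EqOn _ _ (spectrum 𝕜 (-M.toBlocks₁₁))ᶜ := fun t ht => by
    let _ := (P t).toBlocks₁₁.invertibleOfIsUnitDet (hinv t ht)
    exact det_mul_det_toBlocks₁₁_of_invertible (P t)
  have := hLHS.ext_on ((finite_spectrum _).countable.dense_compl 𝕜) hRHS hcompl
  simpa [P] using congrFun this 0

end Matrix

noncomputable def Fin.succSumZeroEquiv (n : ℕ) : Fin n ⊕ Fin 1 ≃ Fin (n + 1) :=
  Equiv.ofBijective (Sum.elim Fin.succ fun _ => 0) <| by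
    refine (Fintype.bijective_iff_injective_and_card _).2 ⟨?_, by simp⟩
    rintro (i | a) (j | b) h <;> simp_all [Fin.ext_iff]

noncomputable def Fin.interiorSumEndsEquiv (n : ℕ) : Fin n ⊕ Fin 2 ≃ Fin (n + 2) :=
  Equiv.ofBijective (Sum.elim (Fin.castSucc ∘ Fin.succ) ![0, Fin.last (n + 1)]) <| by
    refine (Fintype.bijective_iff_injective_and_card _).2 ⟨?_, by simp⟩
    rintro (i | a) (j | b) h <;> (try fin_cases a) <;> (try fin_cases b) <;>
      simp [Fin.ext_iff] at h ⊢ <;> omega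

namespace Matrix

theorem desnanot_jacobi {𝕜 : Type*} [NontriviallyNormedField 𝕜] [CompleteSpace 𝕜] {n : ℕ}
    (M : Matrix (Fin (n + 2)) (Fin (n + 2)) 𝕜) :
    M.det * (M.submatrix (Fin.castSucc ∘ Fin.succ) (Fin.castSucc ∘ Fin.succ)).det =
      (M.submatrix Fin.castSucc Fin.castSucc).det * (M.submatrix Fin.succ Fin.succ).det -
        (M.submatrix Fin.castSucc Fin.succ).det * (M.submatrix Fin.succ Fin.castSucc).det := by
  set e := Fin.interiorSumEndsEquiv n
  have hfirst : e ∘ Sum.map id (fun _ : Fin 1 => 0) = Fin.castSucc ∘ Fin.succSumZeroEquiv n := by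
    ext (i | _) <;> rfl
  have hlast : e ∘ Sum.map id (fun _ : Fin 1 => 1) = Fin.succ ∘ finSumFinEquiv := by
    ext (i | _) <;> simp [e, Fin.interiorSumEndsEquiv]
  have h := det_mul_det_toBlocks₁₁ (M.submatrix e e)
  simp only [borderedMinor, submatrix_submatrix, hfirst, hlast] at h
  simp only [← submatrix_submatrix, det_submatrix_equiv_self,
    det_submatrix_equiv_mul_det_submatrix_equiv] at h
  exact h

end Matrix

def hankelMatrix (s : ℤ → ℝ) (p : ℤ) (k : ℕ) : Matrix (Fin k) (Fin k) ℝ :=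
  Matrix.of fun i j => s (p + (i : ℕ) + (j : ℕ))

theorem hankelDet_eq_det_hankelMatrix (s : ℤ → ℝ) (p : ℤ) (k : ℕ) :
    hankelDet s p k = (hankelMatrix s p k).det := rfl

theorem hankelMatrix_submatrix (s : ℤ → ℝ) {p q : ℤ} {k m : ℕ} {f g : Fin k → Fin m} (a b : ℕ)
    (hf : ∀ i, (f i : ℕ) = i + a) (hg : ∀ j, (g j : ℕ) = j + b) (hq : p + a + b = q) :
    (hankelMatrix s p m).submatrix f g = hankelMatrix s q k := by
  ext i j
  simp only [hankelMatrix, Matrix.submatrix_apply, Matrix.of_apply, hf, hg, ← hq]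
  push_cast
  ring_nf

theorem stmt_4 (s : ℤ → ℝ) (k : ℕ) (hk : 1 ≤ k) :
    hankelDet s 0 k * hankelDet s (-2) k -
      hankelDet s 0 (k - 1) * hankelDet s (-2) (k + 1) = (hankelDet s (-1) k) ^ 2 := by
  obtain ⟨n, rfl⟩ : ∃ n, k = n + 1 := ⟨k - 1, by omega⟩
  set H := hankelMatrix s (-2) (n + 1 + 1)
  have hcore : H.submatrix (Fin.castSucc ∘ Fin.succ) (Fin.castSucc ∘ Fin.succ) =
      hankelMatrix s 0 n := hankelMatrix_submatrix s 1 1 (fun _ => rfl) (fun _ => rfl) (by norm_num)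
  have hfirst : H.submatrix Fin.castSucc Fin.castSucc = hankelMatrix s (-2) (n + 1) :=
    hankelMatrix_submatrix s 0 0 (fun _ => rfl) (fun _ => rfl) (by norm_num)
  have hlast : H.submatrix Fin.succ Fin.succ = hankelMatrix s 0 (n + 1) :=
    hankelMatrix_submatrix s 1 1 (fun _ => rfl) (fun _ => rfl) (by norm_num)
  have hupper : H.submatrix Fin.castSucc Fin.succ = hankelMatrix s (-1) (n + 1) :=
    hankelMatrix_submatrix s 0 1 (fun _ => rfl) (fun _ => rfl) (by norm_num)
  have hlower : H.submatrix Fin.succ Fin.castSucc = hankelMatrix s (-1) (n + 1) :=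
    hankelMatrix_submatrix s 1 0 (fun _ => rfl) (fun _ => rfl) (by norm_num)
  have h := Matrix.desnanot_jacobi H
  rw [hcore, hfirst, hlast, hupper, hlower] at h
  simp only [Nat.add_sub_cancel, hankelDet_eq_det_hankelMatrix]
  linear_combination -h
end

section
/- Let m₁ and m₂ be Herglotz–Nevanlinna functions with m₁(z) = −1/m₂(z), and suppose both m₁(z)/z → 0 and m₂(z)/z → 0 as |z| → ∞ along the imaginary axis. Then for any K ∈ ℕ₀, the moments of the representing measure ρ₂ of m₂ exist up to order 2K if and only if the moments of the representing measure ρ₁ of m₁ exist up to order 2K. -/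
open MeasureTheory Filter Complex

/-- A Herglotz--Nevanlinna function: analytic on `ℂ ∖ ℝ`, mapping the upper
half-plane into its closure, and symmetric under complex conjugation. -/
def IsHerglotz (m : ℂ → ℂ) : Prop :=
  DifferentiableOn ℂ m {z : ℂ | z.im ≠ 0} ∧
  (∀ z : ℂ, 0 < z.im → 0 ≤ (m z).im) ∧
  (∀ z : ℂ, z.im ≠ 0 → m (starRingEnd ℂ z) = starRingEnd ℂ (m z))

/-- The Herglotz integral representation `m(z) = a + bz + ∫ (1/(λ-z) - λ/(1+λ²)) dρ(λ)`
with `a ∈ ℝ`, `b ≥ 0` and `ρ` a non-negative Borel measure with `∫ dρ/(1+λ²) < ∞`. -/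
def HerglotzRep (m : ℂ → ℂ) (a b : ℝ) (ρ : Measure ℝ) : Prop :=
  0 ≤ b ∧ Integrable (fun l : ℝ => 1 / (1 + l ^ 2)) ρ ∧
  ∀ z : ℂ, z.im ≠ 0 →
    m z = (a : ℂ) + (b : ℂ) * z +
      ∫ l : ℝ, (((l : ℂ) - z)⁻¹ - (l : ℂ) / (1 + (l : ℂ) ^ 2)) ∂ρ

/-!
Since `mᵢ(iη)/(iη) → 0`, both representations have `b = 0`. For such a function the
moments of `ρ` up to order `2K` exist iff `m(iη)` has an asymptotic expansion
`∑_{j ≤ 2K+1} u_j (iη)^{-j} + o(η^{-2K-1})` with real coefficients (Hamburger–Nevanlinna).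
Expanding `1/(λ - z)` geometrically gives the expansion from the moments. Conversely, if the
moments up to `2n` exist, the expansion of order `2n + 3` must extend the one they produce,
and what is left says that `η² ∫ λ^{2n+2}/(λ² + η²) dρ` converges; Fatou's lemma then gives
the moment of order `2n + 2`. An expansion of `m₂` with nonzero constant term inverts, through
the inverse power series, to one of `m₁ = -1/m₂`. If the constant term vanishes, the
condition `m₁(iη)/(iη) → 0` forces `ρ₂ = 0`.
-/

open Finset Asymptotics Topology

section Asymptotics

variable {α 𝕜 : Type*} [NormedField 𝕜] {l : Filter α} {w : α → 𝕜}

lemma isLittleO_pow_of_tendsto_zero (hw : Tendsto w l (𝓝 0)) {M N : ℕ} (h : M < N) :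
    (fun x => w x ^ N) =o[l] fun x => w x ^ M :=
  (isLittleO_pow_pow h).comp_tendsto hw

lemma isBigO_pow_of_tendsto_zero (hw : Tendsto w l (𝓝 0)) {M N : ℕ} (h : M ≤ N) :
    (fun x => w x ^ N) =O[l] fun x => w x ^ M := by
  rcases h.lt_or_eq with h | rfl
  · exact (isLittleO_pow_of_tendsto_zero hw h).isBigO
  · exact isBigO_refl _ _

lemma eq_zero_of_const_mul_pow_isLittleO [l.NeBot] (hw : ∀ᶠ x in l, w x ≠ 0) {c : 𝕜} {N : ℕ}
    (h : (fun x => c * w x ^ N) =o[l] fun x => w x ^ N) : c = 0 := by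
  by_contra hc
  refine isLittleO_irrefl ?_ ((isLittleO_const_mul_left_iff hc).1 h)
  exact (hw.mono fun x hx => pow_ne_zero N hx).frequently

lemma eq_zero_of_sum_isLittleO [l.NeBot] (hw : Tendsto w l (𝓝 0)) (hw0 : ∀ᶠ x in l, w x ≠ 0)
    {d : ℕ → 𝕜} {N : ℕ}
    (h : (fun x => ∑ j ∈ range (N + 1), d j * w x ^ j) =o[l] fun x => w x ^ N) :
    ∀ j ≤ N, d j = 0 := by
  induction N with
  | zero =>
    intro j hj
    obtain rfl := Nat.le_zero.1 hj
    simpa using h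
  | succ N ih =>
    have hlow : ∀ j ≤ N, d j = 0 := by
      refine ih ?_
      have htop : (fun x => d (N + 1) * w x ^ (N + 1)) =o[l] fun x => w x ^ N :=
        (isLittleO_pow_of_tendsto_zero hw N.lt_succ_self).const_mul_left _
      refine ((h.trans_isBigO (isBigO_pow_of_tendsto_zero hw N.le_succ)).sub htop).congr_left
        fun x => ?_
      rw [sum_range_succ, add_sub_cancel_right]
    have htop : d (N + 1) = 0 := by
      refine eq_zero_of_const_mul_pow_isLittleO hw0 (h.congr_left fun x => ?_)
      rw [sum_range_succ, sum_eq_zero fun j hj => by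
        rw [hlow j (Nat.lt_succ_iff.1 (mem_range.1 hj)), zero_mul], zero_add]
    intro j hj
    rcases Nat.of_le_succ hj with hj | rfl
    exacts [hlow j hj, htop]

end Asymptotics

lemma PowerSeries.X_pow_dvd_trunc_mul_trunc_sub {R : Type*} [CommRing R] (f g : PowerSeries R)
    (n : ℕ) : Polynomial.X ^ n ∣ trunc n f * trunc n g - trunc n (f * g) := by
  refine Polynomial.X_pow_dvd_iff.2 fun d hd => ?_
  rw [Polynomial.coeff_sub, ← Polynomial.coeff_coe, Polynomial.coe_mul,
    ← coeff_mul_eq_coeff_trunc_mul_trunc _ _ hd, coeff_trunc, if_pos hd, sub_self]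

lemma PowerSeries.aeval_trunc (φ : PowerSeries ℝ) (n : ℕ) (x : ℂ) :
    Polynomial.aeval x (trunc n φ) = ∑ j ∈ range n, ((coeff j φ : ℝ) : ℂ) * x ^ j := by
  simp [Polynomial.aeval_def, eval₂_trunc_eq_sum_range]

lemma tendsto_inv_I_mul_ofReal : Tendsto (fun η : ℝ => (I * η)⁻¹) atTop (𝓝 0) := by
  rw [tendsto_zero_iff_norm_tendsto_zero]
  simp only [norm_inv, norm_mul, norm_I, one_mul, norm_real, Real.norm_eq_abs]
  exact tendsto_inv_atTop_zero.comp tendsto_abs_atTop_atTop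

lemma eventually_inv_I_mul_ofReal_ne_zero : ∀ᶠ η : ℝ in atTop, (I * η)⁻¹ ≠ 0 := by
  filter_upwards [eventually_gt_atTop 0] with η hη
  simp [hη.ne']

def HasAxisExpansion (m : ℂ → ℂ) (u : ℕ → ℝ) (M : ℕ) : Prop :=
  (fun η : ℝ => m (I * η) - ∑ j ∈ range (M + 1), (u j : ℂ) * (I * η)⁻¹ ^ j) =o[atTop]
    fun η => (I * η)⁻¹ ^ M

namespace HasAxisExpansion

variable {m m₁ m₂ : ℂ → ℂ} {u v : ℕ → ℝ} {M N : ℕ}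

lemma mono (h : HasAxisExpansion m u M) (hNM : N ≤ M) : HasAxisExpansion m u N := by
  have hhigh : (fun η : ℝ => ∑ j ∈ Ico (N + 1) (M + 1), (u j : ℂ) * (I * η)⁻¹ ^ j) =o[atTop]
      fun η => (I * η)⁻¹ ^ N :=
    IsLittleO.fun_sum fun j hj => (isLittleO_pow_of_tendsto_zero tendsto_inv_I_mul_ofReal
      (mem_Ico.1 hj).1).const_mul_left _
  refine ((h.trans_isBigO (isBigO_pow_of_tendsto_zero tendsto_inv_I_mul_ofReal hNM)).add
    hhigh).congr_left fun η => ?_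
  rw [← sum_range_add_sum_Ico _ (by omega : N + 1 ≤ M + 1)]
  ring

lemma coeff_eq (hu : HasAxisExpansion m u N) (hv : HasAxisExpansion m v N) :
    ∀ j ≤ N, u j = v j := by
  have hd := eq_zero_of_sum_isLittleO tendsto_inv_I_mul_ofReal
    eventually_inv_I_mul_ofReal_ne_zero (d := fun j => ((v j - u j : ℝ) : ℂ))
    ((hu.sub hv).congr_left fun η => by push_cast; simp only [sub_mul, sum_sub_distrib]; ring)
  exact fun j hj => (sub_eq_zero.1 (ofReal_eq_zero.1 (hd j hj))).symm

lemma tendsto (h : HasAxisExpansion m u M) :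
    Tendsto (fun η : ℝ => m (I * η)) atTop (𝓝 (u 0)) := by
  have h0 := h.mono (Nat.zero_le M)
  simp only [HasAxisExpansion, zero_add, range_one, sum_singleton, pow_zero, mul_one,
    isLittleO_one_iff] at h0
  simpa using h0.add_const (u 0 : ℂ)

open PowerSeries in
lemma neg_inv (h : HasAxisExpansion m₂ v M) (hv : v 0 ≠ 0)
    (hrel : ∀ᶠ η : ℝ in atTop, m₁ (I * η) = -(m₂ (I * η))⁻¹) :
    HasAxisExpansion m₁ (fun j => coeff j (-(mk v)⁻¹)) M := by
  set P := trunc (M + 1) (mk v)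
  set Q := trunc (M + 1) (-(mk v)⁻¹)
  have hw := tendsto_inv_I_mul_ofReal
  obtain ⟨S, hS⟩ : Polynomial.X ^ (M + 1) ∣ 1 + P * Q := by
    have hPQ : trunc (M + 1) (mk v * -(mk v)⁻¹) = -1 := by
      rw [mul_neg, PowerSeries.mul_inv_cancel _ (by simpa using hv), map_neg, trunc_one]
    have := X_pow_dvd_trunc_mul_trunc_sub (mk v) (-(mk v)⁻¹) (M + 1)
    rwa [hPQ, sub_neg_eq_add, add_comm _ (1 : Polynomial ℝ)] at this
  have hbdd : ∀ R : Polynomial ℝ, (fun η : ℝ => Polynomial.aeval (I * η)⁻¹ R) =O[atTop]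
      fun _ => (1 : ℂ) :=
    fun R => ((Polynomial.continuous_aeval R).tendsto 0 |>.comp hw).isBigO_one ℂ
  have hmain : (fun η : ℝ => (I * η)⁻¹ ^ (M + 1) * Polynomial.aeval (I * η)⁻¹ S
      + (m₂ (I * η) - Polynomial.aeval (I * η)⁻¹ P) * Polynomial.aeval (I * η)⁻¹ Q)
      =o[atTop] fun η => (I * η)⁻¹ ^ M := by
    have h1 := (isLittleO_pow_of_tendsto_zero hw M.lt_succ_self).mul_isBigO (hbdd S)
    have h2 := (show (fun η : ℝ => m₂ (I * η) - Polynomial.aeval (I * η)⁻¹ P) =o[atTop] _ from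
      h.congr_left fun η => by simp [P, aeval_trunc]).mul_isBigO (hbdd Q)
    simpa using h1.add h2
  have hinv : (fun η : ℝ => -(m₂ (I * η))⁻¹) =O[atTop] fun _ => (1 : ℂ) :=
    (h.tendsto.inv₀ (ofReal_ne_zero.2 hv)).neg.isBigO_one ℂ
  refine (hinv.mul_isLittleO hmain).congr' ?_ (Eventually.of_forall fun η => one_mul _)
  filter_upwards [hrel, h.tendsto.eventually_ne (ofReal_ne_zero.2 hv)] with η hη hne
  have hSη := congrArg (Polynomial.aeval (I * η)⁻¹) hS
  simp only [map_add, map_mul, map_one, map_pow, Polynomial.aeval_X] at hSη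
  rw [hη, ← hSη, ← aeval_trunc]
  field_simp
  ring

lemma coeff_one_eq_zero_of_neg_inv (h : HasAxisExpansion m₂ v 1) (hv0 : v 0 = 0)
    (hrel : ∀ᶠ η : ℝ in atTop, m₁ (I * η) = -(m₂ (I * η))⁻¹)
    (hlim : Tendsto (fun η : ℝ => m₁ (I * η) / (I * η)) atTop (𝓝 0)) : v 1 = 0 := by
  by_contra hv1
  have hdiv : Tendsto (fun η : ℝ => m₂ (I * η) / (I * η)⁻¹) atTop (𝓝 (v 1 : ℂ)) := by
    have := (IsLittleO.tendsto_div_nhds_zero h).add_const (v 1 : ℂ)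
    rw [zero_add] at this
    refine this.congr' ?_
    filter_upwards [eventually_gt_atTop 0] with η hη
    have hη' : (η : ℂ) ≠ 0 := ofReal_ne_zero.2 hη.ne'
    rw [sum_range_succ, sum_range_one, hv0, ofReal_zero]
    field_simp
    ring
  have := (hdiv.inv₀ (ofReal_ne_zero.2 hv1)).neg
  refine ofReal_ne_zero.2 hv1 (inv_eq_zero.1 (neg_eq_zero.1 (tendsto_nhds_unique
    (this.congr' ?_) hlim)))
  filter_upwards [hrel] with η hη
  rw [hη, div_eq_mul_inv, div_eq_mul_inv, mul_inv, inv_inv, neg_mul]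

end HasAxisExpansion

lemma abs_le_norm_ofReal_sub_I_mul (l η : ℝ) : |l| ≤ ‖(l : ℂ) - I * η‖ := by
  simpa using abs_re_le_norm ((l : ℂ) - I * η)

lemma abs_le_norm_ofReal_sub_I_mul' (l η : ℝ) : |η| ≤ ‖(l : ℂ) - I * η‖ := by
  simpa using abs_im_le_norm ((l : ℂ) - I * η)

lemma ofReal_sub_I_mul_ne_zero (l : ℝ) {η : ℝ} (hη : η ≠ 0) : (l : ℂ) - I * η ≠ 0 :=
  fun h => hη (by simpa using congrArg im h)

lemma re_inv_ofReal_sub_I_mul (l η : ℝ) : ((l : ℂ) - I * η)⁻¹.re = l / (l ^ 2 + η ^ 2) := by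
  simp [inv_re, normSq_apply]
  ring_nf

lemma im_inv_ofReal_sub_I_mul (l η : ℝ) : ((l : ℂ) - I * η)⁻¹.im = η / (l ^ 2 + η ^ 2) := by
  simp [inv_im, normSq_apply]
  ring_nf

lemma norm_inv_ofReal_sub_I_mul_le (l : ℝ) {η : ℝ} (hη : 0 < η) :
    ‖((l : ℂ) - I * η)⁻¹‖ ≤ η⁻¹ := by
  rw [norm_inv]
  exact inv_anti₀ hη ((le_abs_self η).trans (abs_le_norm_ofReal_sub_I_mul' l η))

lemma tendsto_inv_ofReal_sub_I_mul (l : ℝ) :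
    Tendsto (fun η : ℝ => ((l : ℂ) - I * η)⁻¹) atTop (𝓝 0) :=
  squeeze_zero_norm' ((eventually_gt_atTop 0).mono fun _ hη => norm_inv_ofReal_sub_I_mul_le l hη)
    tendsto_inv_atTop_zero

lemma norm_ofReal_pow_succ_mul_inv_le (l η : ℝ) (p : ℕ) :
    ‖(l : ℂ) ^ (p + 1) * ((l : ℂ) - I * η)⁻¹‖ ≤ |l| ^ p := by
  rcases eq_or_ne l 0 with rfl | hl
  · simp
  have hl' : 0 < |l| := abs_pos.2 hl
  rw [norm_mul, norm_inv, norm_pow, norm_real, Real.norm_eq_abs, pow_succ, mul_assoc,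
    ← div_eq_mul_inv]
  exact mul_le_of_le_one_right (by positivity)
    ((div_le_one (hl'.trans_le (abs_le_norm_ofReal_sub_I_mul l η))).2
      (abs_le_norm_ofReal_sub_I_mul l η))

noncomputable def herglotzKernel (z : ℂ) (l : ℝ) : ℂ :=
  ((l : ℂ) - z)⁻¹ - (l : ℂ) / (1 + (l : ℂ) ^ 2)

lemma norm_herglotzKernel_le (l : ℝ) {η : ℝ} (hη : 1 ≤ η) :
    ‖herglotzKernel (I * η) l‖ ≤ 2 * η * (1 / (1 + l ^ 2)) := by
  have hη0 : 0 < η := one_pos.trans_le hη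
  have hne := ofReal_sub_I_mul_ne_zero l hη0.ne'
  have hpos : (0 : ℝ) < 1 + l ^ 2 := by positivity
  have heq : herglotzKernel (I * η) l
      = (1 + l * (I * η)) / (((l : ℂ) - I * η) * ((1 + l ^ 2 : ℝ) : ℂ)) := by
    have : ((1 + l ^ 2 : ℝ) : ℂ) ≠ 0 := ofReal_ne_zero.2 hpos.ne'
    rw [herglotzKernel]
    push_cast at this ⊢
    field_simp
    ring
  have hnum : ‖(1 : ℂ) + l * (I * η)‖ ≤ 2 * η * ‖(l : ℂ) - I * η‖ := by
    have h1 := abs_le_norm_ofReal_sub_I_mul l η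
    have h2 := abs_le_norm_ofReal_sub_I_mul' l η
    rw [abs_of_pos hη0] at h2
    calc ‖(1 : ℂ) + l * (I * η)‖ ≤ 1 + |l| * η := by
          simpa [abs_of_pos hη0] using norm_add_le (1 : ℂ) (l * (I * η))
      _ ≤ 2 * η * ‖(l : ℂ) - I * η‖ := by nlinarith
  rw [heq, norm_div, norm_mul, norm_real, Real.norm_of_nonneg hpos.le, div_le_iff₀ (by positivity)]
  calc _ ≤ 2 * η * ‖(l : ℂ) - I * η‖ := hnum
    _ = _ := by field_simp

lemma integrable_herglotzKernel {ρ : Measure ℝ}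
    (hρ : Integrable (fun l : ℝ => 1 / (1 + l ^ 2)) ρ) {η : ℝ} (hη : 1 ≤ η) :
    Integrable (herglotzKernel (I * η)) ρ :=
  (hρ.const_mul (2 * η)).mono' (by unfold herglotzKernel; fun_prop)
    (ae_of_all _ fun l => norm_herglotzKernel_le l hη)

lemma im_herglotzKernel (l η : ℝ) : (herglotzKernel (I * η) l).im = η / (l ^ 2 + η ^ 2) := by
  have : (l : ℂ) / (1 + (l : ℂ) ^ 2) = ((l / (1 + l ^ 2) : ℝ) : ℂ) := by push_cast; rfl
  rw [herglotzKernel, this, sub_im, ofReal_im, sub_zero, im_inv_ofReal_sub_I_mul]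

lemma inv_sub_eq_neg_sum_add {K : Type*} [Field K] {x z : K} (hz : z ≠ 0) (hxz : x - z ≠ 0)
    (k : ℕ) :
    (x - z)⁻¹ = -∑ j ∈ range k, z⁻¹ ^ (j + 1) * x ^ j + z⁻¹ ^ k * (x ^ k * (x - z)⁻¹) := by
  induction k with
  | zero => simp
  | succ k ih =>
    have hstep : z⁻¹ ^ k * (x ^ k * (x - z)⁻¹)
        = -(z⁻¹ ^ (k + 1) * x ^ k) + z⁻¹ ^ (k + 1) * (x ^ (k + 1) * (x - z)⁻¹) := by
      linear_combination (-(z⁻¹ ^ k * x ^ k * (x - z)⁻¹)) * mul_inv_cancel₀ hz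
        + (-(z⁻¹ * z⁻¹ ^ k * x ^ k)) * mul_inv_cancel₀ hxz
    conv_lhs => rw [ih, hstep]
    rw [sum_range_succ]
    ring

lemma herglotzKernel_I_mul_eq (l : ℝ) {η : ℝ} (hη : η ≠ 0) (p : ℕ) :
    herglotzKernel (I * η) l = ∑ j ∈ range (p + 1), -((I * η)⁻¹ ^ (j + 1) * (l : ℂ) ^ j)
      + ((I * η)⁻¹ ^ (p + 1) * ((l : ℂ) ^ (p + 1) * ((l : ℂ) - I * η)⁻¹)
        - ((l / (1 + l ^ 2) : ℝ) : ℂ)) := by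
  conv_lhs => rw [herglotzKernel, inv_sub_eq_neg_sum_add (by simp [hη])
    (ofReal_sub_I_mul_ne_zero l hη) (p + 1)]
  rw [sum_neg_distrib]
  push_cast
  ring

def HasMoments (ρ : Measure ℝ) (p : ℕ) : Prop :=
  ∀ j ≤ p, Integrable (fun l : ℝ => |l| ^ j) ρ

section Moments

variable {ρ : Measure ℝ} {p : ℕ}

lemma hasMoments_of_integrable (h0 : Integrable (fun _ : ℝ => (1 : ℝ)) ρ)
    (hp : Integrable (fun l : ℝ => |l| ^ p) ρ) : HasMoments ρ p := fun j hj =>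
  (h0.add hp).mono' (by fun_prop) (ae_of_all _ fun l => by
    have : 0 ≤ |l| ^ p := by positivity
    rw [Pi.add_apply, Real.norm_of_nonneg (by positivity)]
    rcases le_total |l| 1 with hl | hl
    · linarith [pow_le_one₀ (abs_nonneg l) hl (n := j)]
    · linarith [pow_le_pow_right₀ hl hj])

lemma HasMoments.integrable_one (h : HasMoments ρ p) : Integrable (fun _ : ℝ => (1 : ℝ)) ρ := by
  simpa using h 0 p.zero_le

lemma HasMoments.integrable_ofReal_pow (h : HasMoments ρ p) {j : ℕ} (hj : j ≤ p) :
    Integrable (fun l : ℝ => (l : ℂ) ^ j) ρ :=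
  (h j hj).mono' (by fun_prop) (ae_of_all _ fun l => by simp)

lemma integrable_div_one_add_sq (h0 : Integrable (fun _ : ℝ => (1 : ℝ)) ρ) :
    Integrable (fun l : ℝ => l / (1 + l ^ 2)) ρ := by
  refine h0.mono' (by fun_prop : Measurable fun l : ℝ => l / (1 + l ^ 2)).aestronglyMeasurable
    (ae_of_all _ fun l => ?_)
  rw [Real.norm_eq_abs, abs_div, abs_of_pos (show (0 : ℝ) < 1 + l ^ 2 by positivity),
    div_le_one (by positivity)]
  nlinarith [sq_abs l, sq_nonneg (|l| - 1)]

lemma integrable_ofReal_pow_succ_mul_inv (hp : Integrable (fun l : ℝ => |l| ^ p) ρ) (η : ℝ) :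
    Integrable (fun l : ℝ => (l : ℂ) ^ (p + 1) * ((l : ℂ) - I * η)⁻¹) ρ :=
  hp.mono' (by fun_prop) (ae_of_all _ fun l => norm_ofReal_pow_succ_mul_inv_le l η p)

end Moments

/-- Expanding `1 / (λ - z) = -∑ⱼ λʲ z⁻ʲ⁻¹` in the Herglotz representation with `b = 0`
produces these coefficients of `z⁻ʲ`. -/
noncomputable def momentCoeff (a : ℝ) (ρ : Measure ℝ) : ℕ → ℝ
  | 0 => a - ∫ l, l / (1 + l ^ 2) ∂ρ
  | j + 1 => -∫ l, l ^ j ∂ρ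

noncomputable def momentRemainder (ρ : Measure ℝ) (k : ℕ) (η : ℝ) : ℂ :=
  ∫ l, (l : ℂ) ^ k * ((l : ℂ) - I * η)⁻¹ ∂ρ

section Remainder

variable {ρ : Measure ℝ} {p : ℕ}

lemma tendsto_momentRemainder (hp : Integrable (fun l : ℝ => |l| ^ p) ρ) :
    Tendsto (momentRemainder ρ (p + 1)) atTop (𝓝 0) := by
  have h0 : (0 : ℂ) = ∫ _ : ℝ, (0 : ℂ) ∂ρ := by simp
  rw [h0]
  refine tendsto_integral_filter_of_dominated_convergence _ (Eventually.of_forall fun η => by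
    fun_prop) (Eventually.of_forall fun η => ae_of_all _ fun l =>
      norm_ofReal_pow_succ_mul_inv_le l η p) hp (ae_of_all _ fun l => ?_)
  simpa using (tendsto_inv_ofReal_sub_I_mul l).const_mul ((l : ℂ) ^ (p + 1))

lemma re_momentRemainder (hp : Integrable (fun l : ℝ => |l| ^ p) ρ) (η : ℝ) :
    (momentRemainder ρ (p + 1) η).re = ∫ l, l ^ (p + 2) / (l ^ 2 + η ^ 2) ∂ρ := by
  rw [momentRemainder, ← RCLike.re_eq_complex_re, ← integral_re
    (integrable_ofReal_pow_succ_mul_inv hp η)]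
  refine integral_congr_ae (ae_of_all _ fun l => ?_)
  simp only [RCLike.re_eq_complex_re]
  rw [← ofReal_pow, re_ofReal_mul, re_inv_ofReal_sub_I_mul]
  ring

end Remainder

lemma integrable_of_tendsto_integral {ρ : Measure ℝ} {F : ℕ → ℝ → ℝ} {f : ℝ → ℝ} {L : ℝ}
    (hF0 : ∀ n l, 0 ≤ F n l) (hF : ∀ n, Integrable (F n) ρ)
    (hFf : ∀ l, Tendsto (fun n => F n l) atTop (𝓝 (f l)))
    (hL : Tendsto (fun n => ∫ l, F n l ∂ρ) atTop (𝓝 L)) : Integrable f ρ := by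
  refine integrable_of_tendsto (ae_of_all _ hFf) (fun n => (hF n).aestronglyMeasurable) ?_
  have hlint : ∀ n, ∫⁻ l, ‖F n l‖ₑ ∂ρ = ENNReal.ofReal (∫ l, F n l ∂ρ) := fun n => by
    rw [ofReal_integral_eq_lintegral_ofReal (hF n) (ae_of_all _ (hF0 n))]
    exact lintegral_congr fun l => Real.enorm_of_nonneg (hF0 n l)
  simp_rw [hlint]
  rw [(ENNReal.tendsto_ofReal hL).liminf_eq]
  exact ENNReal.ofReal_ne_top

lemma tendsto_sq_div_sq_add_sq (l : ℝ) :
    Tendsto (fun η : ℝ => η ^ 2 / (l ^ 2 + η ^ 2)) atTop (𝓝 1) := by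
  have h := (((tendsto_pow_atTop two_ne_zero).inv_tendsto_atTop.const_mul (l ^ 2)).const_add
    1).inv₀ (by norm_num : (1 : ℝ) + l ^ 2 * 0 ≠ 0)
  rw [mul_zero, add_zero, inv_one] at h
  refine h.congr' ?_
  filter_upwards [eventually_gt_atTop 0] with η hη
  simp only [Pi.inv_apply]
  field_simp
  ring

lemma integrable_of_tendsto_integral_mul_sq_div {ρ : Measure ℝ} {f : ℝ → ℝ} {L : ℝ}
    (hf : ∀ l, 0 ≤ f l)
    (hint : ∀ η, 1 ≤ η → Integrable (fun l => f l * (η ^ 2 / (l ^ 2 + η ^ 2))) ρ)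
    (hL : Tendsto (fun η : ℝ => ∫ l, f l * (η ^ 2 / (l ^ 2 + η ^ 2)) ∂ρ) atTop (𝓝 L)) :
    Integrable f ρ := by
  have hseq : Tendsto (fun n : ℕ => ((n + 1 : ℕ) : ℝ)) atTop atTop :=
    tendsto_natCast_atTop_atTop.comp (tendsto_add_atTop_nat 1)
  refine integrable_of_tendsto_integral (fun n l => mul_nonneg (hf l) (by positivity))
    (fun n => hint _ (by simp)) (fun l => ?_) (hL.comp hseq)
  have := ((tendsto_sq_div_sq_add_sq l).const_mul (f l)).comp hseq
  rwa [mul_one] at this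

namespace HerglotzRep

variable {m m₁ m₂ : ℂ → ℂ} {a a₁ a₂ b : ℝ} {ρ ρ₁ ρ₂ : Measure ℝ} {u : ℕ → ℝ} {p : ℕ}

lemma apply_I_mul (h : HerglotzRep m a b ρ) {η : ℝ} (hη : 0 < η) :
    m (I * η) = a + b * (I * η) + ∫ l, herglotzKernel (I * η) l ∂ρ :=
  h.2.2 _ (by simp [hη.ne'])

lemma b_eq_zero (h : HerglotzRep m a b ρ)
    (hlim : Tendsto (fun η : ℝ => m (I * η) / (I * η)) atTop (𝓝 0)) : b = 0 := by
  have hw := tendsto_inv_I_mul_ofReal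
  have hint : Tendsto (fun η : ℝ => ∫ l, herglotzKernel (I * η) l * (I * η)⁻¹ ∂ρ) atTop
      (𝓝 0) := by
    have h0 : (0 : ℂ) = ∫ _ : ℝ, (0 : ℂ) ∂ρ := by simp
    rw [h0]
    refine tendsto_integral_filter_of_dominated_convergence (fun l => 2 * (1 / (1 + l ^ 2)))
      (Eventually.of_forall fun η => by unfold herglotzKernel; fun_prop) ?_ (h.2.1.const_mul 2)
      (ae_of_all _ fun l => ?_)
    · filter_upwards [eventually_ge_atTop 1] with η hη
      refine ae_of_all _ fun l => ?_
      have hη0 : 0 < η := one_pos.trans_le hη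
      rw [norm_mul, norm_inv, norm_mul, norm_I, one_mul, norm_real, Real.norm_of_nonneg hη0.le,
        ← div_eq_mul_inv, div_le_iff₀ hη0]
      linarith [norm_herglotzKernel_le l hη]
    · have := ((tendsto_inv_ofReal_sub_I_mul l).sub_const ((l : ℂ) / (1 + (l : ℂ) ^ 2))).mul hw
      rwa [mul_zero] at this
  have hb : Tendsto (fun η : ℝ => m (I * η) / (I * η)) atTop (𝓝 (b : ℂ)) := by
    have := ((hw.const_mul (a : ℂ)).add hint).const_add (b : ℂ)
    rw [mul_zero, add_zero, add_zero] at this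
    refine this.congr' ?_
    filter_upwards [eventually_gt_atTop 0] with η hη
    have hη' : (η : ℂ) ≠ 0 := ofReal_ne_zero.2 hη.ne'
    rw [h.apply_I_mul hη, integral_mul_const]
    field_simp
    ring
  exact_mod_cast tendsto_nhds_unique hb hlim

lemma eq_sum_add_momentRemainder (h : HerglotzRep m a 0 ρ) (hmom : HasMoments ρ p) {η : ℝ}
    (hη : 0 < η) :
    m (I * η) = ∑ j ∈ range (p + 2), (momentCoeff a ρ j : ℂ) * (I * η)⁻¹ ^ j
      + (I * η)⁻¹ ^ (p + 1) * momentRemainder ρ (p + 1) η := by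
  have hpow : ∀ j ∈ range (p + 1),
      Integrable (fun l : ℝ => -((I * η)⁻¹ ^ (j + 1) * (l : ℂ) ^ j)) ρ := fun j hj =>
    ((hmom.integrable_ofReal_pow (Nat.lt_succ_iff.1 (mem_range.1 hj))).const_mul _).neg
  have hrem := (integrable_ofReal_pow_succ_mul_inv (hmom p le_rfl) η).const_mul
    ((I * η)⁻¹ ^ (p + 1))
  have hreal : Integrable (fun l : ℝ => ((l / (1 + l ^ 2) : ℝ) : ℂ)) ρ :=
    (integrable_div_one_add_sq hmom.integrable_one).ofReal
  have hrest : Integrable (fun l : ℝ => (I * η)⁻¹ ^ (p + 1)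
      * ((l : ℂ) ^ (p + 1) * ((l : ℂ) - I * η)⁻¹) - ((l / (1 + l ^ 2) : ℝ) : ℂ)) ρ :=
    hrem.sub hreal
  have hcoeff : ∑ j ∈ range (p + 1), (momentCoeff a ρ (j + 1) : ℂ) * (I * η)⁻¹ ^ (j + 1)
      = ∑ j ∈ range (p + 1), ∫ l, -((I * η)⁻¹ ^ (j + 1) * (l : ℂ) ^ j) ∂ρ :=
    sum_congr rfl fun j _ => by
      rw [integral_neg, integral_const_mul, momentCoeff, ofReal_neg, ← integral_complex_ofReal]
      push_cast
      ring
  simp only [h.apply_I_mul hη, herglotzKernel_I_mul_eq _ hη.ne' p]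
  rw [integral_add (integrable_finsetSum _ hpow) hrest, integral_finsetSum _ hpow,
    integral_sub hrem hreal, integral_const_mul, integral_complex_ofReal,
    sum_range_succ' (fun j => (momentCoeff a ρ j : ℂ) * (I * η)⁻¹ ^ j), hcoeff, momentCoeff,
    momentRemainder]
  push_cast
  ring

lemma hasAxisExpansion_of_hasMoments (h : HerglotzRep m a 0 ρ) (hmom : HasMoments ρ p) :
    HasAxisExpansion m (momentCoeff a ρ) (p + 1) := by
  have hR := (isLittleO_one_iff ℂ).2 (tendsto_momentRemainder (hmom p le_rfl))
  refine ((isBigO_refl (fun η : ℝ => (I * η)⁻¹ ^ (p + 1)) atTop).mul_isLittleO hR).congr'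
    ?_ (Eventually.of_forall fun η => mul_one _)
  filter_upwards [eventually_gt_atTop 0] with η hη
  rw [h.eq_sum_add_momentRemainder hmom hη]
  ring

lemma mul_im_apply_I_mul (h : HerglotzRep m a 0 ρ) {η : ℝ} (hη : 1 ≤ η) :
    η * (m (I * η)).im = ∫ l, 1 * (η ^ 2 / (l ^ 2 + η ^ 2)) ∂ρ := by
  rw [h.apply_I_mul (one_pos.trans_le hη), add_im, add_im, ofReal_im, ofReal_zero, zero_mul,
    zero_im, zero_add, zero_add, ← RCLike.im_eq_complex_im,
    ← integral_im (integrable_herglotzKernel h.2.1 hη), ← integral_const_mul]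
  refine integral_congr_ae (ae_of_all _ fun l => ?_)
  simp only [RCLike.im_eq_complex_im, im_herglotzKernel]
  ring

lemma integrable_one_of_hasAxisExpansion (h : HerglotzRep m a 0 ρ)
    (hexp : HasAxisExpansion m u 1) : Integrable (fun _ : ℝ => (1 : ℝ)) ρ := by
  have hre := ((continuous_re.tendsto 0).comp (IsLittleO.tendsto_div_nhds_zero hexp)).neg.sub_const
    (u 1)
  rw [zero_re, neg_zero, zero_sub] at hre
  refine integrable_of_tendsto_integral_mul_sq_div (fun _ => zero_le_one) (fun η hη => ?_)
    (hre.congr' ?_)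
  · refine (h.2.1.const_mul (η ^ 2)).mono' (Measurable.aestronglyMeasurable (by fun_prop))
      (ae_of_all _ fun l => ?_)
    rw [one_mul, Real.norm_of_nonneg (by positivity), mul_one_div]
    exact div_le_div_of_nonneg_left (by positivity) (by positivity) (by nlinarith)
  · filter_upwards [eventually_ge_atTop 1] with η hη
    have hη' : (η : ℂ) ≠ 0 := ofReal_ne_zero.2 (one_pos.trans_le hη).ne'
    have e : (m (I * η) - ∑ j ∈ range (1 + 1), (u j : ℂ) * (I * η)⁻¹ ^ j) / (I * η)⁻¹ ^ 1
        = (m (I * η) - u 0) * (I * η) - u 1 := by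
      rw [sum_range_succ, sum_range_one]
      field_simp
      ring
    simp only [Function.comp_apply, e, sub_re, sub_im, mul_re, mul_im, I_re, I_im, ofReal_re,
      ofReal_im]
    rw [← h.mul_im_apply_I_mul hη]
    ring

lemma sub_sum_div_pow_eq_of_eq_momentCoeff (h : HerglotzRep m a 0 ρ) (hmom : HasMoments ρ p)
    (hu : ∀ j ≤ p + 1, u j = momentCoeff a ρ j) {η : ℝ} (hη : 0 < η) :
    (m (I * η) - ∑ j ∈ range (p + 3 + 1), (u j : ℂ) * (I * η)⁻¹ ^ j) / (I * η)⁻¹ ^ (p + 3)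
      = -(((η ^ 2 : ℝ) : ℂ) * momentRemainder ρ (p + 1) η) - u (p + 2) * (I * η)
        - u (p + 3) := by
  have hsum : ∑ j ∈ range (p + 2), (u j : ℂ) * (I * η)⁻¹ ^ j
      = ∑ j ∈ range (p + 2), (momentCoeff a ρ j : ℂ) * (I * η)⁻¹ ^ j :=
    sum_congr rfl fun j hj => by rw [hu j (Nat.lt_succ_iff.1 (mem_range.1 hj))]
  rw [h.eq_sum_add_momentRemainder hmom hη,
    sum_range_succ (fun j => (u j : ℂ) * (I * η)⁻¹ ^ j) (p + 3),
    sum_range_succ (fun j => (u j : ℂ) * (I * η)⁻¹ ^ j) (p + 2), hsum]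
  obtain ⟨W, hW⟩ : ∃ W, (I * (η : ℂ))⁻¹ = W := ⟨_, rfl⟩
  have hW0 : W ≠ 0 := by rw [← hW]; simp [hη.ne']
  have hIη : I * (η : ℂ) = W⁻¹ := by rw [← hW, inv_inv]
  have hη2 : ((η ^ 2 : ℝ) : ℂ) = -W⁻¹ ^ 2 := by
    rw [← hIη, mul_pow, I_sq]
    push_cast
    ring
  rw [hW, hIη, hη2]
  field_simp
  ring

lemma integrable_abs_pow_of_hasAxisExpansion (h : HerglotzRep m a 0 ρ) {n : ℕ}
    (hmom : HasMoments ρ (2 * n)) (hexp : HasAxisExpansion m u (2 * n + 3)) :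
    Integrable (fun l : ℝ => |l| ^ (2 * n + 2)) ρ := by
  have hu : ∀ j ≤ 2 * n + 1, u j = momentCoeff a ρ j :=
    (hexp.mono (by omega)).coeff_eq (h.hasAxisExpansion_of_hasMoments hmom)
  have hre := ((continuous_re.tendsto 0).comp (IsLittleO.tendsto_div_nhds_zero hexp)).neg.sub_const
    (u (2 * n + 3))
  rw [zero_re, neg_zero, zero_sub] at hre
  refine integrable_of_tendsto_integral_mul_sq_div (fun l => by positivity) (fun η hη => ?_)
    (hre.congr' ?_)
  · refine ((hmom (2 * n) le_rfl).const_mul (η ^ 2)).mono'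
      (Measurable.aestronglyMeasurable (by fun_prop)) (ae_of_all _ fun l => ?_)
    have hfrac : l ^ 2 / (l ^ 2 + η ^ 2) ≤ 1 := div_le_one_of_le₀ (by nlinarith) (by positivity)
    rw [Real.norm_of_nonneg (by positivity)]
    calc |l| ^ (2 * n + 2) * (η ^ 2 / (l ^ 2 + η ^ 2))
        = η ^ 2 * |l| ^ (2 * n) * (l ^ 2 / (l ^ 2 + η ^ 2)) := by rw [pow_add, sq_abs]; ring
      _ ≤ η ^ 2 * |l| ^ (2 * n) := mul_le_of_le_one_right (by positivity) hfrac
  · filter_upwards [eventually_gt_atTop 0] with η hη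
    have hint : η ^ 2 * ∫ l, l ^ (2 * n + 2) / (l ^ 2 + η ^ 2) ∂ρ
        = ∫ l, |l| ^ (2 * n + 2) * (η ^ 2 / (l ^ 2 + η ^ 2)) ∂ρ := by
      rw [← integral_const_mul]
      refine integral_congr_ae (ae_of_all _ fun l => ?_)
      dsimp only
      rw [Even.pow_abs (n := 2 * n + 2) ⟨n + 1, by ring⟩ l]
      ring
    simp only [Function.comp_apply, h.sub_sum_div_pow_eq_of_eq_momentCoeff hmom hu hη, sub_re,
      neg_re, re_ofReal_mul, ofReal_re, re_momentRemainder (hmom (2 * n) le_rfl)]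
    rw [show (I * (η : ℂ)).re = 0 by simp, hint]
    ring

lemma hasMoments_of_hasAxisExpansion (h : HerglotzRep m a 0 ρ) {K : ℕ}
    (hexp : HasAxisExpansion m u (2 * K + 1)) : HasMoments ρ (2 * K) := by
  have h0 := h.integrable_one_of_hasAxisExpansion (hexp.mono (by omega))
  suffices ∀ n ≤ K, HasMoments ρ (2 * n) from this K le_rfl
  intro n
  induction n with
  | zero => exact fun _ => hasMoments_of_integrable h0 (by simpa using h0)
  | succ n ih =>
    exact fun hn => hasMoments_of_integrable h0
      (h.integrable_abs_pow_of_hasAxisExpansion (ih (by omega)) (hexp.mono (by omega)))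

lemma apply_eq_zero_of_momentCoeff_eq_zero (h : HerglotzRep m a 0 ρ)
    (hρ : Integrable (fun _ : ℝ => (1 : ℝ)) ρ) (h0 : momentCoeff a ρ 0 = 0)
    (h1 : momentCoeff a ρ 1 = 0) {z : ℂ} (hz : z.im ≠ 0) : m z = 0 := by
  have : IsFiniteMeasure ρ := (integrable_const_iff.1 hρ).resolve_left one_ne_zero
  obtain rfl : ρ = 0 := by
    simpa [momentCoeff, measureReal_eq_zero_iff] using h1
  obtain rfl : a = 0 := by simpa [momentCoeff] using h0
  simpa using h.2.2 z hz

lemma hasMoments_of_neg_inv (hrep₁ : HerglotzRep m₁ a₁ 0 ρ₁) (hrep₂ : HerglotzRep m₂ a₂ 0 ρ₂)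
    (hrel : ∀ z : ℂ, z.im ≠ 0 → m₁ z = -(m₂ z)⁻¹)
    (hlim₁ : Tendsto (fun η : ℝ => m₁ (I * η) / (I * η)) atTop (𝓝 0)) {K : ℕ}
    (hmom : HasMoments ρ₂ (2 * K)) : HasMoments ρ₁ (2 * K) := by
  have hexp := hrep₂.hasAxisExpansion_of_hasMoments hmom
  have hrel' : ∀ᶠ η : ℝ in atTop, m₁ (I * η) = -(m₂ (I * η))⁻¹ :=
    (eventually_gt_atTop 0).mono fun η hη => hrel _ (by simp [hη.ne'])
  by_cases hv0 : momentCoeff a₂ ρ₂ 0 = 0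
  · -- Then `ρ₂ = 0` and `m₂ = 0`, so `m₁ = -0⁻¹ = 0` by Lean's convention.
    have hv1 := (hexp.mono (by omega)).coeff_one_eq_zero_of_neg_inv hv0 hrel' hlim₁
    refine hrep₁.hasMoments_of_hasAxisExpansion (u := 0) ((isLittleO_zero _ _).congr' ?_
      EventuallyEq.rfl)
    filter_upwards [eventually_gt_atTop 0] with η hη
    have hz : (I * (η : ℂ)).im ≠ 0 := by simp [hη.ne']
    simp [hrel _ hz, hrep₂.apply_eq_zero_of_momentCoeff_eq_zero hmom.integrable_one hv0 hv1 hz]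
  · exact hrep₁.hasMoments_of_hasAxisExpansion (hexp.neg_inv hv0 hrel')

end HerglotzRep

theorem stmt_11_general (m₁ m₂ : ℂ → ℂ)
    (a₁ b₁ a₂ b₂ : ℝ) (ρ₁ ρ₂ : Measure ℝ)
    (hrep₁ : HerglotzRep m₁ a₁ b₁ ρ₁) (hrep₂ : HerglotzRep m₂ a₂ b₂ ρ₂)
    (hrel : ∀ z : ℂ, z.im ≠ 0 → m₁ z = -(m₂ z)⁻¹)
    (hlim₁ : Tendsto (fun η : ℝ => m₁ (Complex.I * (η : ℂ)) / (Complex.I * (η : ℂ)))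
      atTop (nhds 0))
    (hlim₂ : Tendsto (fun η : ℝ => m₂ (Complex.I * (η : ℂ)) / (Complex.I * (η : ℂ)))
      atTop (nhds 0))
    (K : ℕ) :
    (∀ j ≤ 2 * K, Integrable (fun l : ℝ => |l| ^ j) ρ₂) ↔
      (∀ j ≤ 2 * K, Integrable (fun l : ℝ => |l| ^ j) ρ₁) := by
  obtain rfl := hrep₁.b_eq_zero hlim₁
  obtain rfl := hrep₂.b_eq_zero hlim₂
  have hrel' : ∀ z : ℂ, z.im ≠ 0 → m₂ z = -(m₁ z)⁻¹ := fun z hz => by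
    rw [hrel z hz, inv_neg, inv_inv, neg_neg]
  exact ⟨hrep₁.hasMoments_of_neg_inv hrep₂ hrel hlim₁, hrep₂.hasMoments_of_neg_inv hrep₁ hrel' hlim₂⟩

theorem stmt_11 (m₁ m₂ : ℂ → ℂ) (h₁ : IsHerglotz m₁) (h₂ : IsHerglotz m₂)
    (a₁ b₁ a₂ b₂ : ℝ) (ρ₁ ρ₂ : Measure ℝ)
    (hrep₁ : HerglotzRep m₁ a₁ b₁ ρ₁) (hrep₂ : HerglotzRep m₂ a₂ b₂ ρ₂)
    (hrel : ∀ z : ℂ, z.im ≠ 0 → m₁ z = -(m₂ z)⁻¹)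
    (hlim₁ : Tendsto (fun η : ℝ => m₁ (Complex.I * (η : ℂ)) / (Complex.I * (η : ℂ)))
      atTop (nhds 0))
    (hlim₂ : Tendsto (fun η : ℝ => m₂ (Complex.I * (η : ℂ)) / (Complex.I * (η : ℂ)))
      atTop (nhds 0))
    (K : ℕ) :
    (∀ j ≤ 2 * K, Integrable (fun l : ℝ => |l| ^ j) ρ₂) ↔
      (∀ j ≤ 2 * K, Integrable (fun l : ℝ => |l| ^ j) ρ₁) :=
  stmt_11_general m₁ m₂ a₁ b₁ a₂ b₂ ρ₁ ρ₂ hrep₁ hrep₂ hrel hlim₁ hlim₂ K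
end

section
/- If m is a Herglotz–Nevanlinna function whose representing measure ρ is finite (i.e., ρ(ℝ) = s₀ < ∞ and s₀ > 0), then the function z ↦ −(∫ 1/(λ−z) dρ(λ))^{−1} − z/s₀ is a Herglotz–Nevanlinna function q satisfying q(iη)/(iη) → 0 as η → ∞. -/
/-!
Write `C` for the Cauchy transform of `ρ`, `s₀ = ρ(ℝ)` and `G(z) = ∫ |λ - z|⁻² dρ(λ)`.
Taking imaginary parts under the integral gives `Im C(z) = Im z · G(z)`, so `C` does not vanish
off the real axis, and Cauchy–Schwarz gives `|C(z)|² ≤ s₀ G(z)`. Hence for `Im z > 0`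
`Im (-1 / C(z)) = Im C(z) / |C(z)|² ≥ Im z / s₀`, which is the positivity of the imaginary part
of `q(z) = -1 / C(z) - z / s₀`. Along the imaginary axis `iη / (λ - iη) → -1` boundedly, so
`iη C(iη) → -s₀` by dominated convergence and `q(iη) / (iη) = -1 / (iη C(iη)) - 1 / s₀ → 0`.
-/

open MeasureTheory Filter Complex

open Set Topology ComplexConjugate

section CauchySchwarz

variable {α : Type*} [MeasurableSpace α] {μ : Measure α} [IsFiniteMeasure μ]

lemma sq_integral_le_measureReal_univ_mul_integral_sq {g : α → ℝ} (hg : Integrable g μ)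
    (hg2 : Integrable (fun x ↦ g x ^ 2) μ) :
    (∫ x, g x ∂μ) ^ 2 ≤ μ.real univ * ∫ x, g x ^ 2 ∂μ := by
  set s := μ.real univ
  set A := ∫ x, g x ∂μ
  set G := ∫ x, g x ^ 2 ∂μ
  have h_expand : ∫ x, (s * g x - A) ^ 2 ∂μ = s * (s * G - A ^ 2) := by
    have h_pt : ∀ x, (s * g x - A) ^ 2 = s ^ 2 * g x ^ 2 - 2 * s * A * g x + A ^ 2 :=
      fun x ↦ by ring
    simp_rw [h_pt]
    rw [integral_add (f := fun x ↦ s ^ 2 * g x ^ 2 - 2 * s * A * g x)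
      ((hg2.const_mul _).sub (hg.const_mul _)) (integrable_const _),
      integral_sub (hg2.const_mul _) (hg.const_mul _), integral_const_mul, integral_const_mul,
      integral_const, smul_eq_mul]
    ring
  have h_nonneg : 0 ≤ s * (s * G - A ^ 2) :=
    h_expand ▸ integral_nonneg fun x ↦ sq_nonneg _
  rcases measureReal_nonneg.eq_or_lt with hs | hs
  · have hμ : μ = 0 := Measure.measure_univ_eq_zero.mp ((measureReal_eq_zero_iff).mp hs.symm)
    simp [A, s, hμ]
  · nlinarith

lemma sq_norm_integral_le_measureReal_univ_mul_integral_sq_norm {E : Type*}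
    [NormedAddCommGroup E] [NormedSpace ℝ E] {f : α → E} (hf : Integrable f μ)
    (hf2 : Integrable (fun x ↦ ‖f x‖ ^ 2) μ) :
    ‖∫ x, f x ∂μ‖ ^ 2 ≤ μ.real univ * ∫ x, ‖f x‖ ^ 2 ∂μ :=
  (pow_le_pow_left₀ (norm_nonneg _) (norm_integral_le_integral_norm f) 2).trans
    (sq_integral_le_measureReal_univ_mul_integral_sq hf.norm hf2)

end CauchySchwarz

section Resolvent

variable {z : ℂ}

lemma abs_im_le_norm_ofReal_sub (l : ℝ) (z : ℂ) : |z.im| ≤ ‖(l : ℂ) - z‖ := by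
  simpa using abs_im_le_norm ((l : ℂ) - z)

lemma ofReal_sub_ne_zero (hz : z.im ≠ 0) (l : ℝ) : (l : ℂ) - z ≠ 0 :=
  norm_pos_iff.mp ((abs_pos.mpr hz).trans_le (abs_im_le_norm_ofReal_sub l z))

lemma norm_inv_ofReal_sub_le {ε : ℝ} (hε : 0 < ε) (hz : ε ≤ |z.im|) (l : ℝ) :
    ‖((l : ℂ) - z)⁻¹‖ ≤ ε⁻¹ := by
  rw [norm_inv]
  exact inv_anti₀ hε (hz.trans (abs_im_le_norm_ofReal_sub l z))

lemma continuous_inv_ofReal_sub (hz : z.im ≠ 0) : Continuous fun l : ℝ ↦ ((l : ℂ) - z)⁻¹ :=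
  (continuous_ofReal.sub continuous_const).inv₀ (ofReal_sub_ne_zero hz)

lemma im_inv_ofReal_sub (l : ℝ) (z : ℂ) :
    (((l : ℂ) - z)⁻¹).im = z.im * ‖((l : ℂ) - z)⁻¹‖ ^ 2 := by
  rw [inv_im, norm_inv, inv_pow, ← normSq_eq_norm_sq]
  simp [div_eq_mul_inv]

variable {ρ : Measure ℝ} [IsFiniteMeasure ρ]

lemma integrable_inv_ofReal_sub (hz : z.im ≠ 0) : Integrable (fun l : ℝ ↦ ((l : ℂ) - z)⁻¹) ρ :=
  .of_bound (continuous_inv_ofReal_sub hz).aestronglyMeasurable _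
    (.of_forall (norm_inv_ofReal_sub_le (abs_pos.mpr hz) le_rfl))

lemma integrable_norm_inv_ofReal_sub_sq (hz : z.im ≠ 0) :
    Integrable (fun l : ℝ ↦ ‖((l : ℂ) - z)⁻¹‖ ^ 2) ρ :=
  .of_bound ((continuous_inv_ofReal_sub hz).norm.pow 2).aestronglyMeasurable (|z.im|⁻¹ ^ 2)
    (.of_forall fun l ↦ by
      rw [norm_pow, norm_norm]
      gcongr
      exact norm_inv_ofReal_sub_le (abs_pos.mpr hz) le_rfl l)

lemma integral_norm_inv_ofReal_sub_sq_pos [NeZero ρ] (hz : z.im ≠ 0) :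
    0 < ∫ l : ℝ, ‖((l : ℂ) - z)⁻¹‖ ^ 2 ∂ρ := by
  rw [integral_pos_iff_support_of_nonneg (fun l ↦ sq_nonneg _)
    (integrable_norm_inv_ofReal_sub_sq hz)]
  have h_supp : Function.support (fun l : ℝ ↦ ‖((l : ℂ) - z)⁻¹‖ ^ 2) = univ :=
    eq_univ_of_forall fun l ↦ by simpa using ofReal_sub_ne_zero hz l
  rw [h_supp]
  exact Measure.measure_univ_pos.mpr (NeZero.ne ρ)

end Resolvent

noncomputable def cauchyTransform (ρ : Measure ℝ) (z : ℂ) : ℂ :=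
  ∫ l : ℝ, ((l : ℂ) - z)⁻¹ ∂ρ

namespace cauchyTransform

lemma conj_apply (ρ : Measure ℝ) (z : ℂ) :
    cauchyTransform ρ (conj z) = conj (cauchyTransform ρ z) := by
  simp_rw [cauchyTransform, ← integral_conj, map_inv₀, map_sub, conj_ofReal]

variable {ρ : Measure ℝ} [IsFiniteMeasure ρ] {z : ℂ}

lemma im_apply (hz : z.im ≠ 0) :
    (cauchyTransform ρ z).im = z.im * ∫ l : ℝ, ‖((l : ℂ) - z)⁻¹‖ ^ 2 ∂ρ := by
  rw [cauchyTransform, ← integral_const_mul]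
  simp_rw [← im_inv_ofReal_sub]
  exact (integral_im (integrable_inv_ofReal_sub hz)).symm

lemma ne_zero [NeZero ρ] (hz : z.im ≠ 0) : cauchyTransform ρ z ≠ 0 := fun h ↦ by
  have h_im := im_apply (ρ := ρ) hz
  rw [h, zero_im] at h_im
  exact mul_ne_zero hz (integral_norm_inv_ofReal_sub_sq_pos hz).ne' h_im.symm

lemma normSq_le (hz : z.im ≠ 0) :
    normSq (cauchyTransform ρ z) ≤ ρ.real univ * ∫ l : ℝ, ‖((l : ℂ) - z)⁻¹‖ ^ 2 ∂ρ := by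
  rw [normSq_eq_norm_sq]
  exact sq_norm_integral_le_measureReal_univ_mul_integral_sq_norm
    (integrable_inv_ofReal_sub hz) (integrable_norm_inv_ofReal_sub_sq hz)

lemma im_div_measureReal_univ_le_im_neg_inv [NeZero ρ] (hz : 0 < z.im) :
    z.im / ρ.real univ ≤ (-(cauchyTransform ρ z)⁻¹).im := by
  have hG := integral_norm_inv_ofReal_sub_sq_pos (ρ := ρ) hz.ne'
  have hC := normSq_pos.mpr (ne_zero (ρ := ρ) hz.ne')
  rw [neg_im, inv_im, neg_div, neg_neg, im_apply hz.ne',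
    div_le_div_iff₀ measureReal_univ_pos hC]
  nlinarith [normSq_le (ρ := ρ) hz.ne']

lemma hasDerivAt {z₀ : ℂ} (hz₀ : z₀.im ≠ 0) :
    HasDerivAt (cauchyTransform ρ) (∫ l : ℝ, (((l : ℂ) - z₀) ^ 2)⁻¹ ∂ρ) z₀ := by
  set ε := |z₀.im| / 2
  have hε : 0 < ε := by positivity
  have h_im : ∀ z ∈ Metric.ball z₀ ε, ε ≤ |z.im| := fun z hz ↦ by
    rw [Metric.mem_ball, dist_eq] at hz
    have h_dist : |z₀.im - z.im| < ε := by
      simpa [abs_sub_comm] using (abs_im_le_norm (z - z₀)).trans_lt hz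
    linarith [abs_sub_abs_le_abs_sub z₀.im z.im, show ε = |z₀.im| / 2 from rfl]
  have h_ne : ∀ z ∈ Metric.ball z₀ ε, z.im ≠ 0 := fun z hz ↦
    abs_pos.mp (hε.trans_le (h_im z hz))
  refine (hasDerivAt_integral_of_dominated_loc_of_deriv_le (μ := ρ)
    (F := fun z (l : ℝ) ↦ ((l : ℂ) - z)⁻¹) (F' := fun z (l : ℝ) ↦ (((l : ℂ) - z) ^ 2)⁻¹)
    (bound := fun _ ↦ ε⁻¹ ^ 2) (Metric.ball_mem_nhds z₀ hε) ?_
    (integrable_inv_ofReal_sub hz₀) ?_ ?_ (integrable_const _) ?_).2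
  · filter_upwards [Metric.ball_mem_nhds z₀ hε] with z hz
    exact (continuous_inv_ofReal_sub (h_ne z hz)).aestronglyMeasurable
  · exact ((continuous_inv_ofReal_sub hz₀).pow 2).aestronglyMeasurable.congr
      (.of_forall fun l ↦ inv_pow _ 2)
  · refine .of_forall fun l z hz ↦ ?_
    rw [← inv_pow, norm_pow]
    gcongr
    exact norm_inv_ofReal_sub_le hε (h_im z hz) l
  · refine .of_forall fun l z hz ↦ ?_
    simpa using ((hasDerivAt_id z).const_sub (l : ℂ)).fun_inv (ofReal_sub_ne_zero (h_ne z hz) l)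

lemma differentiableOn : DifferentiableOn ℂ (cauchyTransform ρ) {z : ℂ | z.im ≠ 0} :=
  fun _ hz ↦ (hasDerivAt hz).differentiableAt.differentiableWithinAt

lemma tendsto_I_mul_mul :
    Tendsto (fun η : ℝ ↦ I * η * cauchyTransform ρ (I * η)) atTop (𝓝 (-(ρ.real univ : ℂ))) := by
  have h_lim : Tendsto (fun η : ℝ ↦ ∫ l : ℝ, I * η * ((l : ℂ) - I * η)⁻¹ ∂ρ) atTop
      (𝓝 (∫ _ : ℝ, (-1 : ℂ) ∂ρ)) := by
    refine tendsto_integral_filter_of_dominated_convergence (fun _ ↦ 1) ?_ ?_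
      (integrable_const _) ?_
    · filter_upwards [eventually_gt_atTop 0] with η hη
      exact (continuous_const.mul
        (continuous_inv_ofReal_sub (by simpa using hη.ne'))).aestronglyMeasurable
    · filter_upwards [eventually_gt_atTop 0] with η hη
      refine .of_forall fun l ↦ ?_
      have h_le := norm_inv_ofReal_sub_le (z := I * η) (abs_pos.mpr hη.ne') (by simp) l
      rw [norm_mul, norm_mul, norm_I, one_mul, norm_real, Real.norm_eq_abs]
      calc |η| * ‖((l : ℂ) - I * η)⁻¹‖ ≤ |η| * |η|⁻¹ := by gcongr
        _ = 1 := mul_inv_cancel₀ (abs_pos.mpr hη.ne').ne'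
    · refine .of_forall fun l ↦ ?_
      -- `I η (l - I η)⁻¹ = -1 + l (l - I η)⁻¹`, and `‖l - I η‖ ≥ |η| → ∞`
      have h_cobdd : Tendsto (fun η : ℝ ↦ (l : ℂ) - I * η) atTop (Bornology.cobounded ℂ) := by
        refine tendsto_norm_atTop_iff_cobounded.mp (tendsto_atTop_mono (fun η ↦ ?_)
          (tendsto_abs_atTop_atTop (G := ℝ)))
        simpa using abs_im_le_norm_ofReal_sub l (I * η)
      have h_rest := ((tendsto_inv₀_cobounded.comp h_cobdd).const_mul (l : ℂ)).const_add (-1)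
      rw [mul_zero, add_zero] at h_rest
      refine h_rest.congr' ?_
      filter_upwards [eventually_ne_atTop 0] with η hη
      have h_ne := ofReal_sub_ne_zero (z := I * η) (by simpa using hη) l
      simp only [Function.comp_apply]
      field_simp
      ring
  simp_rw [cauchyTransform, ← integral_const_mul]
  simpa [integral_const] using h_lim

end cauchyTransform

section Herglotz

variable {ρ : Measure ℝ} [IsFiniteMeasure ρ] [NeZero ρ]

lemma isHerglotz_neg_inv_cauchyTransform_sub :
    IsHerglotz fun z ↦ -(cauchyTransform ρ z)⁻¹ - z / (ρ.real univ : ℂ) := by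
  refine ⟨fun z hz ↦ ?_, fun z hz ↦ ?_, fun z _ ↦ ?_⟩
  · exact ((cauchyTransform.differentiableOn z hz).inv (cauchyTransform.ne_zero hz)).neg.sub
      (differentiableWithinAt_id.div_const _)
  · rw [sub_im, div_ofReal_im, sub_nonneg]
    exact cauchyTransform.im_div_measureReal_univ_le_im_neg_inv hz
  · simp [cauchyTransform.conj_apply, map_div₀]

lemma tendsto_neg_inv_cauchyTransform_sub_div_I_mul :
    Tendsto (fun η : ℝ ↦ (-(cauchyTransform ρ (I * η))⁻¹ - I * η / (ρ.real univ : ℂ)) / (I * η))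
      atTop (𝓝 0) := by
  have hs : (ρ.real univ : ℂ) ≠ 0 := ofReal_ne_zero.mpr measureReal_univ_ne_zero
  have h_lim := ((cauchyTransform.tendsto_I_mul_mul (ρ := ρ)).inv₀
    (neg_ne_zero.mpr hs)).neg.sub_const (ρ.real univ : ℂ)⁻¹
  rw [inv_neg, neg_neg, sub_self] at h_lim
  refine h_lim.congr' ?_
  filter_upwards [eventually_ne_atTop 0] with η hη
  have hη' : (η : ℂ) ≠ 0 := ofReal_ne_zero.mpr hη
  have hC := cauchyTransform.ne_zero (ρ := ρ) (z := I * η) (by simpa using hη)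
  field_simp

end Herglotz

theorem stmt_13 (ρ : Measure ℝ) [IsFiniteMeasure ρ]
    (s₀ : ℝ) (hs₀ : s₀ = (ρ Set.univ).toReal) (hpos : 0 < s₀) :
    IsHerglotz (fun z : ℂ => -(∫ l : ℝ, ((l : ℂ) - z)⁻¹ ∂ρ)⁻¹ - z / (s₀ : ℂ)) ∧
    Tendsto (fun η : ℝ =>
        (-(∫ l : ℝ, ((l : ℂ) - Complex.I * (η : ℂ))⁻¹ ∂ρ)⁻¹ -
          (Complex.I * (η : ℂ)) / (s₀ : ℂ)) / (Complex.I * (η : ℂ)))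
      atTop (nhds 0) := by
  subst hs₀
  have : NeZero ρ := ⟨fun h ↦ by simp [h] at hpos⟩
  exact ⟨isHerglotz_neg_inv_cauchyTransform_sub, tendsto_neg_inv_cauchyTransform_sub_div_I_mul⟩
end
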